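/- arXiv:2403.07295 — 2 statements merged into one kernel-verified Lean document; each statement's English description precedes it below -/
import Mathlib

section
/- Let d ≥ 2 be an integer, let n_y ≥ 0 be real, and let n_Z be a d×d real symmetric positive definite matrix; set n := (0, n_y, n_Z) ∈ E. Then K_logdet ∩ {q ∈ E : ⟨q, n⟩ = 0} = {(x, 0, 0) ∈ E : x ≤ 0}, where the last component is the zero matrix. -/
/-!
The trace pairing of a positive semidefinite matrix with a positive definite one is nonnegative,
and vanishes only at zero: writing `n_Z = Dᴴ D` with `D` invertible, `tr (Z n_Z) = tr (D Z Dᴴ)`.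
On the branch `y > 0` of the cone both `y n_y` and `tr (Z n_Z)` are nonnegative and the second is
positive (since `Z ≻ 0` and `d ≠ 0`), so no such point is orthogonal to `n`. On the branch `y = 0`
orthogonality forces `tr (Z n_Z) = 0`, hence `Z = 0`.
-/

open Matrix Filter

noncomputable section

/-- The space `E = ℝ × ℝ × S^d` (matrix parts are required to be symmetric where relevant). -/
abbrev E (d : ℕ) : Type := ℝ × ℝ × Matrix (Fin d) (Fin d) ℝ

/-- The inner product `⟨(x,y,Z),(x',y',Z')⟩ = x x' + y y' + tr (Z Z')` on `E`. -/
def ip {d : ℕ} (p q : E d) : ℝ := p.1 * q.1 + p.2.1 * q.2.1 + (p.2.2 * q.2.2).trace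

/-- The induced norm `‖(x,y,Z)‖ = sqrt (x² + y² + tr (Z²))` on `E`. -/
def nrm {d : ℕ} (p : E d) : ℝ := Real.sqrt (p.1 ^ 2 + p.2.1 ^ 2 + (p.2.2 * p.2.2).trace)

/-- Distance from a point to a set: `dist(p, S) = inf {‖p - s‖ : s ∈ S}`. -/
def sdist {d : ℕ} (p : E d) (S : Set (E d)) : ℝ := sInf {r : ℝ | ∃ s ∈ S, r = nrm (p - s)}

/-- The log-determinant cone `K_logdet`. -/
def Klogdet (d : ℕ) : Set (E d) :=
  {p | (0 < p.2.1 ∧ p.2.2.PosDef ∧ p.1 ≤ p.2.1 * Real.log ((p.2.1⁻¹ • p.2.2).det))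
    ∨ (p.1 ≤ 0 ∧ p.2.1 = 0 ∧ p.2.2.PosSemidef)}

namespace Matrix

open scoped ComplexOrder

variable {𝕜 n : Type*} [RCLike 𝕜] [Fintype n] {A B : Matrix n n 𝕜}

open scoped MatrixOrder Matrix.Norms.L2Operator in
lemma PosSemidef.exists_eq_conjTranspose_mul_self (hB : B.PosSemidef) :
    ∃ D : Matrix n n 𝕜, B = Dᴴ * D := by
  classical
  exact CStarAlgebra.nonneg_iff_eq_star_mul_self.mp hB.nonneg

open scoped MatrixOrder Matrix.Norms.L2Operator in
lemma PosDef.exists_isUnit_eq_conjTranspose_mul_self [DecidableEq n] (hB : B.PosDef) :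
    ∃ D : Matrix n n 𝕜, IsUnit D ∧ B = Dᴴ * D :=
  CStarAlgebra.isStrictlyPositive_iff_eq_star_mul_self.mp hB.isStrictlyPositive

lemma PosSemidef.trace_mul_nonneg (hA : A.PosSemidef) (hB : B.PosSemidef) :
    0 ≤ (A * B).trace := by
  obtain ⟨D, rfl⟩ := hB.exists_eq_conjTranspose_mul_self
  rw [← mul_assoc, trace_mul_cycle]
  exact (hA.mul_mul_conjTranspose_same D).trace_nonneg

lemma PosSemidef.trace_mul_posDef_eq_zero_iff (hA : A.PosSemidef) (hB : B.PosDef) :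
    (A * B).trace = 0 ↔ A = 0 := by
  classical
  refine ⟨fun h ↦ ?_, fun h ↦ by simp [h]⟩
  obtain ⟨D, hD, rfl⟩ := hB.exists_isUnit_eq_conjTranspose_mul_self
  rw [← mul_assoc, trace_mul_cycle, (hA.mul_mul_conjTranspose_same D).trace_eq_zero_iff] at h
  have hDH : IsUnit Dᴴ := by simpa using hD.star
  simpa using hD.mul_right_eq_zero.mp (hDH.mul_left_eq_zero.mp h)

lemma PosDef.trace_mul_pos [Nonempty n] (hA : A.PosDef) (hB : B.PosDef) :
    0 < (A * B).trace := by
  have hA0 : A ≠ 0 := fun h ↦ hA.trace_pos.ne' (by simp [h])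
  exact (hA.posSemidef.trace_mul_nonneg hB.posSemidef).lt_of_ne'
    (mt (hA.posSemidef.trace_mul_posDef_eq_zero_iff hB).mp hA0)

end Matrix

/-- Proposition 3.1(d): the face of `K_logdet` exposed by `n = (0, n_y, n_Z)` with `n_y ≥ 0`
and `n_Z ≻ 0` is `F_∞ = ℝ₋ × {0} × {0}`. -/
theorem stmt_6 (d : ℕ) (hd : 2 ≤ d) (ny : ℝ) (hny : 0 ≤ ny)
    (nZ : Matrix (Fin d) (Fin d) ℝ) (hnZ : nZ.PosDef) :
    Klogdet d ∩ {q : E d | ip q (0, ny, nZ) = 0}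
      = {p : E d | p.1 ≤ 0 ∧ p.2.1 = 0 ∧ p.2.2 = 0} := by
  have : Nonempty (Fin d) := ⟨⟨0, by omega⟩⟩
  ext ⟨x, y, Z⟩
  simp only [Set.mem_inter_iff, Set.mem_ofPred_eq, Klogdet, ip, mul_zero, zero_add]
  constructor
  · rintro ⟨⟨hy, hZ, -⟩ | ⟨hx, rfl, hZ⟩, hip⟩
    · linarith [hZ.trace_mul_pos hnZ, mul_nonneg hy.le hny]
    · exact ⟨hx, rfl, (hZ.trace_mul_posDef_eq_zero_iff hnZ).mp (by simpa using hip)⟩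
  · rintro ⟨hx, rfl, rfl⟩
    exact ⟨Or.inr ⟨hx, rfl, .zero⟩, by simp⟩
end
end

section
/- Let d ≥ 2 be an integer, let n_y > 0 be real, set n := (0, n_y, 0) ∈ E, and let F_d := {(x, 0, Z) ∈ E : x ≤ 0 and Z is positive semidefinite} (which equals K_logdet ∩ {n}^⊥). Then for every η > 0 there exists κ > 0 such that for every q ∈ E with ⟨q, n⟩ = 0 and ‖q‖ ≤ η one has dist(q, F_d) ≤ κ · g_d(dist(q, K_logdet)). -/
open Matrix Filter

noncomputable section

/-- The piecewise modified Boltzmann–Shannon entropy `g_d`. -/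
def gd (t : ℝ) : ℝ :=
  if t = 0 then 0
  else if t ≤ Real.exp (-2) then -t * Real.log t
  else t + Real.exp (-2)

/-!
Write `q = (x, 0, Z)`. If `p = (x', y', Z') ∈ K_logdet` lies within `s` of `q` with `y' > 0`, then
`y' ≤ s` and the entries of `Z'` are bounded in terms of `‖q‖`, so `det Z'` is bounded and
`x' ≤ y' log det Z' + d (-y' log y') = O(s) + d (-s log s)`, the function `-t log t` being
increasing on `[0, e⁻¹]`. Hence `(min x 0, 0, Z') ∈ F_d` is within `O(s) + d (-s log s)` of `q`.
Letting `s` decrease to `dist(q, K_logdet)` gives the bound for small distances; for large ones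
`dist(q, F_d) ≤ ‖q‖ ≤ η` suffices.
-/

open Real

namespace Matrix

variable {n : Type*} [Fintype n]

lemma IsSymm.trace_mul_self {M : Matrix n n ℝ} (hM : M.IsSymm) :
    (M * M).trace = ∑ i, ∑ j, M i j ^ 2 := by
  simp only [trace, diag, mul_apply]
  refine Finset.sum_congr rfl fun i _ => Finset.sum_congr rfl fun j _ => ?_
  rw [hM.apply i j, sq]

lemma IsSymm.trace_mul_self_nonneg {M : Matrix n n ℝ} (hM : M.IsSymm) : 0 ≤ (M * M).trace := by
  rw [hM.trace_mul_self]
  positivity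

lemma IsSymm.sq_apply_le_trace_mul_self {M : Matrix n n ℝ} (hM : M.IsSymm) (i j : n) :
    M i j ^ 2 ≤ (M * M).trace := by
  rw [hM.trace_mul_self]
  calc M i j ^ 2 ≤ ∑ j', M i j' ^ 2 :=
        Finset.single_le_sum (f := fun j' => M i j' ^ 2) (fun _ _ => sq_nonneg _)
          (Finset.mem_univ j)
    _ ≤ ∑ i', ∑ j', M i' j' ^ 2 :=
        Finset.single_le_sum (f := fun i' => ∑ j', M i' j' ^ 2)
          (fun _ _ => by positivity) (Finset.mem_univ i)

lemma det_le_factorial_mul_pow [DecidableEq n] {A : Matrix n n ℝ} {c : ℝ}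
    (h : ∀ i j, |A i j| ≤ c) : A.det ≤ (Fintype.card n).factorial * c ^ Fintype.card n :=
  (le_abs_self _).trans (by simpa using det_le (abv := AbsoluteValue.abs) h)

end Matrix

namespace Real

lemma negMulLog_le_negMulLog {x y : ℝ} (hx : 0 ≤ x) (hxy : x ≤ y) (hy : y ≤ exp (-1)) :
    negMulLog x ≤ negMulLog y := by
  rw [negMulLog_eq_neg]
  exact neg_le_neg (mul_log_strictAntiOn.antitoneOn ⟨hx, hxy.trans hy⟩
    ⟨hx.trans hxy, hy⟩ hxy)

lemma self_le_negMulLog {x : ℝ} (hx : 0 ≤ x) (hx1 : x ≤ exp (-1)) : x ≤ negMulLog x := by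
  rcases hx.eq_or_lt with rfl | hpos
  · simp
  have hlog : log x ≤ -1 := by simpa using log_le_log hpos hx1
  rw [negMulLog]
  nlinarith

lemma mul_log_det_inv_smul_le {n : Type*} [Fintype n] [DecidableEq n] {Z : Matrix n n ℝ}
    {y s D : ℝ} (hy : 0 < y) (hys : y ≤ s) (hs : s ≤ exp (-1)) (hZ : 0 < Z.det)
    (hZD : Z.det ≤ D) (hD : 1 ≤ D) :
    y * log ((y⁻¹ • Z).det) ≤ s * log D + Fintype.card n * negMulLog s := by
  have hsplit : y * log ((y⁻¹ • Z).det) = y * log Z.det + Fintype.card n * negMulLog y := by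
    rw [Matrix.det_smul, log_mul (pow_ne_zero _ (inv_ne_zero hy.ne')) hZ.ne', log_pow, log_inv,
      negMulLog]
    ring
  have hlogdet : y * log Z.det ≤ s * log D :=
    calc y * log Z.det ≤ y * log D := by gcongr
      _ ≤ s * log D := by gcongr; exact log_nonneg hD
  have hent := negMulLog_le_negMulLog hy.le hys hs
  rw [hsplit]
  gcongr

end Real

lemma gd_eq_negMulLog {t : ℝ} (ht : t ≤ exp (-2)) : gd t = negMulLog t := by
  unfold gd
  split_ifs with h0
  · simp [h0]
  · rfl

lemma one_le_factorial_mul_add_one_pow (d : ℕ) {η : ℝ} (hη : 0 ≤ η) :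
    1 ≤ (d.factorial : ℝ) * (η + 1) ^ d :=
  one_le_mul_of_one_le_of_one_le (mod_cast d.factorial_pos) (one_le_pow₀ (by linarith))

variable {d : ℕ}

def logdetFace (d : ℕ) : Set (E d) := {p | p.1 ≤ 0 ∧ p.2.1 = 0 ∧ p.2.2.PosSemidef}

lemma zero_mem_logdetFace : (0 : E d) ∈ logdetFace d :=
  ⟨le_rfl, rfl, PosSemidef.zero⟩

lemma zero_mem_Klogdet : (0 : E d) ∈ Klogdet d :=
  Or.inr zero_mem_logdetFace

lemma nrm_nonneg (p : E d) : 0 ≤ nrm p :=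
  sqrt_nonneg _

lemma abs_fst_le_nrm {p : E d} (hp : p.2.2.IsSymm) : |p.1| ≤ nrm p :=
  abs_le_sqrt (by nlinarith [hp.trace_mul_self_nonneg, sq_nonneg p.2.1])

lemma abs_snd_le_nrm {p : E d} (hp : p.2.2.IsSymm) : |p.2.1| ≤ nrm p :=
  abs_le_sqrt (by nlinarith [hp.trace_mul_self_nonneg, sq_nonneg p.1])

lemma abs_apply_le_nrm {p : E d} (hp : p.2.2.IsSymm) (i j : Fin d) : |p.2.2 i j| ≤ nrm p :=
  abs_le_sqrt (by nlinarith [hp.sq_apply_le_trace_mul_self i j, sq_nonneg p.1, sq_nonneg p.2.1])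

lemma nrm_le_abs_fst_add_nrm {p p' : E d} (hp : p.2.1 = 0) (hpp' : p.2.2 = p'.2.2)
    (hp' : p'.2.2.IsSymm) : nrm p ≤ |p.1| + nrm p' := by
  have hsq : nrm p' ^ 2 = p'.1 ^ 2 + p'.2.1 ^ 2 + (p'.2.2 * p'.2.2).trace :=
    sq_sqrt (by nlinarith [hp'.trace_mul_self_nonneg, sq_nonneg p'.1, sq_nonneg p'.2.1])
  rw [nrm, sqrt_le_left (add_nonneg (abs_nonneg _) (nrm_nonneg p')), hp, hpp']
  nlinarith [sq_abs p.1, mul_nonneg (abs_nonneg p.1) (nrm_nonneg p'), sq_nonneg p'.1,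
    sq_nonneg p'.2.1]

lemma sdist_nonneg (q : E d) (S : Set (E d)) : 0 ≤ sdist q S :=
  Real.sInf_nonneg fun _ ⟨_, _, hr⟩ => hr ▸ sqrt_nonneg _

lemma sdist_le_nrm_sub (q : E d) {S : Set (E d)} {p : E d} (hp : p ∈ S) :
    sdist q S ≤ nrm (q - p) :=
  csInf_le ⟨0, fun _ ⟨_, _, hr⟩ => hr ▸ sqrt_nonneg _⟩ ⟨p, hp, rfl⟩

lemma exists_nrm_sub_lt_of_sdist_lt {q : E d} {S : Set (E d)} (hS : S.Nonempty) {r : ℝ}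
    (h : sdist q S < r) : ∃ p ∈ S, nrm (q - p) < r := by
  obtain ⟨p₀, hp₀⟩ := hS
  unfold sdist at h
  obtain ⟨_, ⟨p, hp, rfl⟩, hlt⟩ := exists_lt_of_csInf_lt
    (s := {r | ∃ p ∈ S, r = nrm (q - p)}) ⟨nrm (q - p₀), p₀, hp₀, rfl⟩ h
  exact ⟨p, hp, hlt⟩

lemma fst_le_of_nrm_sub_le {η s : ℝ} {q p : E d} (hq : q.2.2.IsSymm) (hqy : q.2.1 = 0)
    (hqη : nrm q ≤ η) (hs : s ≤ exp (-1)) (hy : 0 < p.2.1) (hZ : p.2.2.PosDef)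
    (hx : p.1 ≤ p.2.1 * log ((p.2.1⁻¹ • p.2.2).det)) (hqp : nrm (q - p) ≤ s) :
    p.1 ≤ s * log (d.factorial * (η + 1) ^ d) + d * negMulLog s := by
  have hM : (q - p).2.2.IsSymm := hq.sub (isHermitian_iff_isSymm.mp hZ.isHermitian)
  have hys : p.2.1 ≤ s := by
    have h := (abs_snd_le_nrm hM).trans hqp
    rw [show (q - p).2.1 = -p.2.1 by simp [hqy], abs_neg] at h
    exact (le_abs_self _).trans h
  have hη : 0 ≤ η := (nrm_nonneg q).trans hqη
  have hentry : ∀ i j, |p.2.2 i j| ≤ η + 1 := fun i j =>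
    calc |p.2.2 i j| = |q.2.2 i j - (q - p).2.2 i j| := by simp
      _ ≤ |q.2.2 i j| + |(q - p).2.2 i j| := abs_sub _ _
      _ ≤ η + 1 := add_le_add ((abs_apply_le_nrm hq i j).trans hqη)
        (((abs_apply_le_nrm hM i j).trans hqp).trans (hs.trans (by simp)))
  have hdet : p.2.2.det ≤ d.factorial * (η + 1) ^ d := by
    simpa using det_le_factorial_mul_pow hentry
  simpa using hx.trans (mul_log_det_inv_smul_le hy hys hs hZ.det_pos hdet
    (one_le_factorial_mul_add_one_pow d hη))

lemma sdist_logdetFace_le_of_nrm_sub_le {η s : ℝ} {q p : E d} (hq : q.2.2.IsSymm)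
    (hqy : q.2.1 = 0) (hqη : nrm q ≤ η) (hs : s ≤ exp (-1)) (hp : p ∈ Klogdet d)
    (hqp : nrm (q - p) ≤ s) :
    sdist q (logdetFace d) ≤
      (log (d.factorial * (η + 1) ^ d) + 2) * s + d * negMulLog s := by
  have hs0 : 0 ≤ s := (nrm_nonneg _).trans hqp
  have hL : 0 ≤ log (d.factorial * (η + 1) ^ d) :=
    log_nonneg (one_le_factorial_mul_add_one_pow d ((nrm_nonneg q).trans hqη))
  have hent : 0 ≤ negMulLog s := negMulLog_nonneg hs0 (hs.trans (by simp))
  rcases hp with ⟨hy, hZ, hx⟩ | hface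
  · have hM : (q - p).2.2.IsSymm := hq.sub (isHermitian_iff_isSymm.mp hZ.isHermitian)
    have hx' := fst_le_of_nrm_sub_le hq hqy hqη hs hy hZ hx hqp
    have hxs : q.1 - p.1 ≤ s := (le_abs_self _).trans ((abs_fst_le_nrm hM).trans hqp)
    have hf : (min q.1 0, (0 : ℝ), p.2.2) ∈ logdetFace d :=
      ⟨min_le_right _ _, rfl, hZ.posSemidef⟩
    calc sdist q (logdetFace d) ≤ nrm (q - (min q.1 0, 0, p.2.2)) := sdist_le_nrm_sub q hf
      _ ≤ |q.1 - min q.1 0| + nrm (q - p) :=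
          nrm_le_abs_fst_add_nrm (by simp [hqy]) rfl hM
      _ = max q.1 0 + nrm (q - p) := by
          rw [abs_of_nonneg (sub_nonneg.2 (min_le_left _ _))]
          rcases le_total q.1 0 with h | h <;> simp [h]
      _ ≤ _ := by
          have : max q.1 0 ≤ s * log (d.factorial * (η + 1) ^ d) + d * negMulLog s + s :=
            max_le (by linarith) (by positivity)
          linarith
  · calc sdist q (logdetFace d) ≤ nrm (q - p) := sdist_le_nrm_sub q hface
      _ ≤ _ := by nlinarith

lemma sdist_logdetFace_le {η : ℝ} {q : E d} (hq : q.2.2.IsSymm) (hqy : q.2.1 = 0)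
    (hqη : nrm q ≤ η) (ht : sdist q (Klogdet d) < exp (-1)) :
    sdist q (logdetFace d) ≤ (log (d.factorial * (η + 1) ^ d) + 2) * sdist q (Klogdet d)
      + d * negMulLog (sdist q (Klogdet d)) := by
  have hbound : Continuous fun s => (log (d.factorial * (η + 1) ^ d) + 2) * s +
      d * negMulLog s := by fun_prop
  have hlim := (hbound.tendsto (sdist q (Klogdet d))).mono_left
    (nhdsWithin_le_nhds (s := Set.Ioi (sdist q (Klogdet d))))
  refine ge_of_tendsto hlim ?_
  filter_upwards [Ioo_mem_nhdsGT ht] with s hs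
  obtain ⟨p, hp, hqp⟩ := exists_nrm_sub_lt_of_sdist_lt ⟨0, zero_mem_Klogdet⟩ hs.1
  exact sdist_logdetFace_le_of_nrm_sub_le hq hqy hqη hs.2.le hp hqp.le

theorem stmt_9_general (d : ℕ) (ny : ℝ) (hny : 0 < ny) :
    ∀ η : ℝ, 0 < η → ∃ κ : ℝ, 0 < κ ∧ ∀ q : E d, q.2.2.IsSymm →
      ip q (0, ny, (0 : Matrix (Fin d) (Fin d) ℝ)) = 0 → nrm q ≤ η →
      sdist q {p : E d | p.1 ≤ 0 ∧ p.2.1 = 0 ∧ p.2.2.PosSemidef}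
        ≤ κ * gd (sdist q (Klogdet d)) := by
  intro η hη
  set C := log (d.factorial * (η + 1) ^ d) + 2
  have hC : 0 ≤ C := by
    linarith [log_nonneg (one_le_factorial_mul_add_one_pow d hη.le)]
  refine ⟨C + d + η * exp 2, by positivity, fun q hq hip hqη => ?_⟩
  have hqy : q.2.1 = 0 := by simpa [ip, hny.ne'] using hip
  change sdist q (logdetFace d) ≤ _
  set t := sdist q (Klogdet d)
  have ht : 0 ≤ t := sdist_nonneg q _
  rcases le_or_gt t (exp (-2)) with hsmall | hlarge
  · have ht1 : t ≤ exp (-1) := hsmall.trans (exp_le_exp.2 (by norm_num))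
    have hent := self_le_negMulLog ht ht1
    rw [gd_eq_negMulLog hsmall]
    calc sdist q (logdetFace d) ≤ C * t + d * negMulLog t :=
          sdist_logdetFace_le hq hqy hqη (hsmall.trans_lt (exp_lt_exp.2 (by norm_num)))
      _ ≤ (C + d + η * exp 2) * negMulLog t := by
          nlinarith [mul_le_mul_of_nonneg_left hent hC, mul_nonneg (by positivity : 0 ≤ η * exp 2)
            (ht.trans hent)]
  · have hgd : gd t = t + exp (-2) := by
      rw [gd, if_neg ((exp_pos _).trans hlarge).ne', if_neg hlarge.not_ge]
    calc sdist q (logdetFace d) ≤ nrm q := by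
          simpa using sdist_le_nrm_sub q zero_mem_logdetFace
      _ ≤ η * exp 2 * exp (-2) := by rw [mul_assoc, ← exp_add]; simpa using hqη
      _ ≤ (C + d + η * exp 2) * gd t := by rw [hgd]; gcongr <;> linarith

/-- Theorem 3.1 (entropic error bound concerning `F_d`): for `n = (0, n_y, 0)`, `n_y > 0`, and
any `η > 0` there is `κ > 0` with `dist(q, F_d) ≤ κ g_d(dist(q, K_logdet))` for all
`q ∈ {n}^⊥` with `‖q‖ ≤ η`. -/
theorem stmt_9 (d : ℕ) (hd : 2 ≤ d) (ny : ℝ) (hny : 0 < ny) :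
    ∀ η : ℝ, 0 < η → ∃ κ : ℝ, 0 < κ ∧ ∀ q : E d, q.2.2.IsSymm →
      ip q (0, ny, (0 : Matrix (Fin d) (Fin d) ℝ)) = 0 → nrm q ≤ η →
      sdist q {p : E d | p.1 ≤ 0 ∧ p.2.1 = 0 ∧ p.2.2.PosSemidef}
        ≤ κ * gd (sdist q (Klogdet d)) :=
  stmt_9_general d ny hny
end
end
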